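/- Under the assumptions above (minimizers of D on B_R are not global minimizers, i.e. K*(y-u) ≠ 0), the support of any minimizer x̃ is contained in the finite set Γ = {λ : |(K*(y-u))_λ| = ‖K*(y-u)‖_∞}; in particular, every minimizer has finitely many nonzero entries. -/

import Mathlib

open scoped ENNReal NNReal InnerProductSpace

/-!
Write `a = K*(y - u)` and `M = ‖a‖_∞`. Since `B_R` is convex and `K x̃ = u` is the point of
`K '' B_R` nearest to `y`, a minimizer satisfies `⟪a, w⟫ ≤ ⟪a, x̃⟫` for all `w ∈ B_R`. Testing
this with `w = ±R e_{i₀}` at a coordinate where `|a i₀| = M` gives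
`R M ≤ ⟪a, x̃⟫ ≤ ∑ |a i| |x̃ i| ≤ M ‖x̃‖₁ ≤ R M`, so `|a i| = M` wherever `x̃ i ≠ 0`.
As `a ∈ ℓ²` and `M > 0`, only finitely many coordinates satisfy `|a i| ≥ M`.
-/

/-- The `ℓ¹`-ball of radius `R` inside `ℓ²(I)`. -/
noncomputable def l1Ball (I : Type*) (R : ℝ) : Set (lp (fun _ : I => ℝ) 2) :=
  {x | (∑' i, (‖x i‖₊ : ℝ≥0∞)) ≤ ENNReal.ofReal R}

namespace Memℓp

variable {I : Type*} {E : I → Type*} [∀ i, NormedAddCommGroup (E i)] {p : ℝ≥0∞} {f : ∀ i, E i}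

theorem finite_setOf_le_norm (hf : Memℓp f p) (hp : 0 < p.toReal) {ε : ℝ} (hε : 0 < ε) :
    {i | ε ≤ ‖f i‖}.Finite := by
  have hsmall := (hf.summable hp).tendsto_cofinite_zero.eventually_lt_const
    (Real.rpow_pos_of_pos hε p.toReal)
  exact (Filter.eventually_cofinite.mp hsmall).subset fun i hi =>
    not_lt.mpr (Real.rpow_le_rpow hε.le hi hp.le)

theorem bddAbove_range_norm (hf : Memℓp f p) : BddAbove (Set.range fun i => ‖f i‖) :=
  memℓp_infty_iff.mp (hf.of_exponent_ge le_top)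

theorem iSup_norm_pos (hf : Memℓp f p) (h : f ≠ 0) : 0 < ⨆ i, ‖f i‖ := by
  obtain ⟨i, hi⟩ := Function.ne_iff.mp h
  exact (norm_pos_iff.mpr hi).trans_le (le_ciSup hf.bddAbove_range_norm i)

theorem finite_setOf_norm_eq_iSup (hf : Memℓp f p) (hp : 0 < p.toReal) (h : f ≠ 0) :
    {i | ‖f i‖ = ⨆ j, ‖f j‖}.Finite :=
  (hf.finite_setOf_le_norm hp (hf.iSup_norm_pos h)).subset fun _ hi => hi.ge

theorem exists_norm_eq_iSup (hf : Memℓp f p) (hp : 0 < p.toReal) (h : f ≠ 0) :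
    ∃ i, ‖f i‖ = ⨆ j, ‖f j‖ := by
  set M := ⨆ j, ‖f j‖
  have hM : 0 < M := hf.iSup_norm_pos h
  have : Nonempty I := let ⟨i, _⟩ := Function.ne_iff.mp h; ⟨i⟩
  obtain ⟨i₁, hi₁⟩ := exists_lt_of_lt_ciSup (half_lt_self hM)
  obtain ⟨i, hi, hmax⟩ := Set.exists_max_image _ (fun j => ‖f j‖)
    (hf.finite_setOf_le_norm hp (half_pos hM)) ⟨i₁, hi₁.le⟩
  refine ⟨i, le_antisymm (le_ciSup hf.bddAbove_range_norm i) (ciSup_le fun j => ?_)⟩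
  by_cases hj : M / 2 ≤ ‖f j‖
  · exact hmax j hj
  · exact (not_le.mp hj).le.trans hi

end Memℓp

theorem lp.inner_lt_mul_tsum_norm {I : Type*} {E : I → Type*} [∀ i, NormedAddCommGroup (E i)]
    [∀ i, InnerProductSpace ℝ (E i)] {a x : lp E 2} {M : ℝ} (ha : ∀ j, ‖a j‖ ≤ M)
    (hx : Summable fun j => ‖x j‖) {i : I} (hxi : x i ≠ 0) (hai : ‖a i‖ < M) :
    ⟪a, x⟫_ℝ < M * ∑' j, ‖x j‖ := by
  rw [lp.inner_eq_tsum, ← tsum_mul_left]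
  refine (lp.summable_inner a x).tsum_lt_tsum (i := i) (fun j => ?_) ?_ (hx.mul_left M)
  · exact (real_inner_le_norm _ _).trans
      (mul_le_mul_of_nonneg_right (ha j) (norm_nonneg _))
  · exact (real_inner_le_norm _ _).trans_lt
      (mul_lt_mul_of_pos_right hai (norm_pos_iff.mpr hxi))

theorem ContinuousLinearMap.inner_adjoint_sub_nonpos_of_isMinOn {E F : Type*}
    [NormedAddCommGroup E] [InnerProductSpace ℝ E] [CompleteSpace E]
    [NormedAddCommGroup F] [InnerProductSpace ℝ F] [CompleteSpace F]
    (K : E →L[ℝ] F) (y : F) {C : Set E} (hC : Convex ℝ C) {x : E} (hx : x ∈ C)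
    (hmin : IsMinOn (fun w => ‖K w - y‖ ^ 2) C x) {w : E} (hw : w ∈ C) :
    ⟪adjoint K (y - K x), w - x⟫_ℝ ≤ 0 := by
  have hKC : Convex ℝ (K '' C) := hC.linear_image K.toLinearMap
  let Kx : K '' C := ⟨K x, x, hx, rfl⟩
  have : Nonempty (K '' C) := ⟨Kx⟩
  have hnearest : ‖y - K x‖ = ⨅ v : K '' C, ‖y - v‖ := by
    refine le_antisymm (le_ciInf ?_) (ciInf_le ⟨0, ?_⟩ Kx)
    · rintro ⟨_, z, hz, rfl⟩
      rw [norm_sub_rev y, norm_sub_rev y]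
      exact (pow_le_pow_iff_left₀ (norm_nonneg _) (norm_nonneg _) two_ne_zero).mp
        (isMinOn_iff.mp hmin z hz)
    · rintro _ ⟨v, rfl⟩
      exact norm_nonneg _
  have := (norm_eq_iInf_iff_real_inner_le_zero hKC Kx.2).mp hnearest (K w) ⟨w, hw, rfl⟩
  rwa [ContinuousLinearMap.adjoint_inner_left, map_sub]

section l1Ball

variable {I : Type*} {R : ℝ}

theorem convex_l1Ball : Convex ℝ (l1Ball I R) := by
  intro x hx w hw s t hs ht hst
  simp only [l1Ball, Set.mem_ofPred_eq, ← enorm_eq_nnnorm] at hx hw ⊢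
  calc ∑' i, ‖(s • x + t • w : lp (fun _ : I => ℝ) 2) i‖ₑ
      ≤ ∑' i, (ENNReal.ofReal s * ‖x i‖ₑ + ENNReal.ofReal t * ‖w i‖ₑ) := by
        refine ENNReal.tsum_le_tsum fun i => ?_
        rw [← Real.enorm_eq_ofReal hs, ← Real.enorm_eq_ofReal ht, ← enorm_smul, ← enorm_smul]
        exact enorm_add_le _ _
    _ = ENNReal.ofReal s * ∑' i, ‖x i‖ₑ + ENNReal.ofReal t * ∑' i, ‖w i‖ₑ := by
        rw [ENNReal.tsum_add, ENNReal.tsum_mul_left, ENNReal.tsum_mul_left]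
    _ ≤ ENNReal.ofReal s * ENNReal.ofReal R + ENNReal.ofReal t * ENNReal.ofReal R := by gcongr
    _ = ENNReal.ofReal R := by
        rw [← add_mul, ← ENNReal.ofReal_add hs ht, hst, ENNReal.ofReal_one, one_mul]

theorem summable_norm_of_mem_l1Ball {x : lp (fun _ : I => ℝ) 2} (hx : x ∈ l1Ball I R) :
    Summable fun i => ‖x i‖ := by
  have hfin : ∑' i, (‖x i‖₊ : ℝ≥0∞) ≠ ⊤ := ne_top_of_le_ne_top ENNReal.ofReal_ne_top hx
  exact NNReal.summable_coe.mpr (ENNReal.tsum_coe_ne_top_iff_summable.mp hfin)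

theorem tsum_norm_le_of_mem_l1Ball (hR : 0 ≤ R) {x : lp (fun _ : I => ℝ) 2}
    (hx : x ∈ l1Ball I R) : ∑' i, ‖x i‖ ≤ R := by
  rw [← ENNReal.ofReal_le_ofReal_iff hR, ENNReal.ofReal_tsum_of_nonneg (fun _ => norm_nonneg _)
    (summable_norm_of_mem_l1Ball hx)]
  simp only [ofReal_norm]
  exact hx

theorem exists_mem_l1Ball_inner_eq (hR : 0 ≤ R) (a : lp (fun _ : I => ℝ) 2) (i : I) :
    ∃ w ∈ l1Ball I R, ⟪a, w⟫_ℝ = R * ‖a i‖ := by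
  classical
  refine ⟨lp.single 2 i (R * SignType.sign (a i)), ?_, ?_⟩
  · have hsign : |(SignType.sign (a i) : ℝ)| ≤ 1 := by
      rcases lt_trichotomy (a i) 0 with h | h | h <;> simp [h]
    simp only [l1Ball, Set.mem_ofPred_eq, ← enorm_eq_nnnorm]
    rw [tsum_eq_single i fun j hj => by simp [Pi.single_eq_of_ne hj],
      lp.single_apply_self, Real.enorm_eq_ofReal_abs, abs_mul, abs_of_nonneg hR]
    exact ENNReal.ofReal_le_ofReal (mul_le_of_le_one_right hR hsign)
  · rw [lp.inner_single_right, Real.inner_apply, Real.norm_eq_abs, ← self_mul_sign]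
    ring

end l1Ball

theorem stmt12_general {I : Type*} {H : Type*} [NormedAddCommGroup H]
    [InnerProductSpace ℝ H] [CompleteSpace H]
    (K : lp (fun _ : I => ℝ) 2 →L[ℝ] H) (y : H) (R : ℝ) (hR : 0 < R)
    (u : H)
    (hu : ∀ xt ∈ l1Ball I R,
      (∀ w ∈ l1Ball I R, ‖K xt - y‖ ^ 2 ≤ ‖K w - y‖ ^ 2) → K xt = u)
    (hne : (ContinuousLinearMap.adjoint K) (y - u) ≠ 0) :
    {i : I | |(ContinuousLinearMap.adjoint K) (y - u) i| =
        (⨆ j : I, |(ContinuousLinearMap.adjoint K) (y - u) j|)}.Finite ∧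
    ∀ xt ∈ l1Ball I R,
      (∀ w ∈ l1Ball I R, ‖K xt - y‖ ^ 2 ≤ ‖K w - y‖ ^ 2) →
      {i : I | xt i ≠ 0} ⊆
        {i : I | |(ContinuousLinearMap.adjoint K) (y - u) i| =
          (⨆ j : I, |(ContinuousLinearMap.adjoint K) (y - u) j|)} := by
  set a := ContinuousLinearMap.adjoint K (y - u)
  have ha : Memℓp (⇑a) 2 := lp.memℓp a
  have ha0 : (⇑a : I → ℝ) ≠ 0 := fun h => hne (lp.ext h)
  simp only [← Real.norm_eq_abs]
  refine ⟨ha.finite_setOf_norm_eq_iSup (by norm_num) ha0, fun xt hxt hmin i hi => ?_⟩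
  set M := ⨆ j, ‖a j‖
  have haM : ∀ j, ‖a j‖ ≤ M := le_ciSup ha.bddAbove_range_norm
  by_contra hai
  have hopt : ∀ w ∈ l1Ball I R, ⟪a, w⟫_ℝ ≤ ⟪a, xt⟫_ℝ := fun w hw => by
    have := K.inner_adjoint_sub_nonpos_of_isMinOn y convex_l1Ball hxt (isMinOn_iff.mpr hmin) hw
    rw [hu xt hxt hmin, inner_sub_right] at this
    linarith
  obtain ⟨i₀, hi₀⟩ : ∃ i₀, ‖a i₀‖ = M := ha.exists_norm_eq_iSup (by norm_num) ha0
  obtain ⟨w, hw, hwa⟩ := exists_mem_l1Ball_inner_eq hR.le a i₀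
  rw [hi₀] at hwa
  have hlt := lp.inner_lt_mul_tsum_norm haM (summable_norm_of_mem_l1Ball hxt) hi
    ((haM i).lt_of_ne hai)
  have hle : M * ∑' j, ‖xt j‖ ≤ M * R :=
    mul_le_mul_of_nonneg_left (tsum_norm_le_of_mem_l1Ball hR.le hxt) (ha.iSup_norm_pos ha0).le
  linarith [hopt w hw]

/-- If `u` is the common image under `K` of the minimizers of `‖Kx-y‖²` over `B_R` and
`K*(y-u) ≠ 0`, then the set `Γ = {i : |(K*(y-u)) i| = ‖K*(y-u)‖_∞}` is finite and contains the
support of every minimizer; in particular every minimizer has finitely many nonzero entries. -/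
theorem stmt12 {I : Type*} [Countable I] {H : Type*} [NormedAddCommGroup H]
    [InnerProductSpace ℝ H] [CompleteSpace H]
    (K : lp (fun _ : I => ℝ) 2 →L[ℝ] H) (y : H) (R : ℝ) (hR : 0 < R)
    (u : H)
    (hu : ∀ xt ∈ l1Ball I R,
      (∀ w ∈ l1Ball I R, ‖K xt - y‖ ^ 2 ≤ ‖K w - y‖ ^ 2) → K xt = u)
    (hex : ∃ xt ∈ l1Ball I R, ∀ w ∈ l1Ball I R, ‖K xt - y‖ ^ 2 ≤ ‖K w - y‖ ^ 2)
    (hne : (ContinuousLinearMap.adjoint K) (y - u) ≠ 0) :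
    {i : I | |(ContinuousLinearMap.adjoint K) (y - u) i| =
        (⨆ j : I, |(ContinuousLinearMap.adjoint K) (y - u) j|)}.Finite ∧
    ∀ xt ∈ l1Ball I R,
      (∀ w ∈ l1Ball I R, ‖K xt - y‖ ^ 2 ≤ ‖K w - y‖ ^ 2) →
      {i : I | xt i ≠ 0} ⊆
        {i : I | |(ContinuousLinearMap.adjoint K) (y - u) i| =
          (⨆ j : I, |(ContinuousLinearMap.adjoint K) (y - u) j|)} :=
  stmt12_general K y R hR u hu hne
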